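/- Let W = ((s₁ t₁),…,(s_r t_r)) be a tuple of transpositions of S(d) whose spectrum is weakly increasing, with colour multiplicities m₂,…,m_d. Then the orbit of W under the sorting action of S(r) has size exactly r!/(m₂! m₃! ⋯ m_d!), the multinomial coefficient. -/

import Mathlib

/-- A transposition step `(s t)` of `S(d)` recorded with `s < t`; its colour is `t`. -/
def Step (d : ℕ) : Type := {p : Fin d × Fin d // p.1 < p.2}

/-- The permutation (transposition) corresponding to a step. -/
def stepPerm {d : ℕ} (x : Step d) : Equiv.Perm (Fin d) := Equiv.swap x.1.1 x.1.2

/-- The colour of a step, i.e. the larger of the two interchanged points. -/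
def colour {d : ℕ} (x : Step d) : Fin d := x.1.2

/-- The product of a tuple of steps, taken in order. -/
def stepProd {d r : ℕ} (W : Fin r → Step d) : Equiv.Perm (Fin d) :=
  (List.ofFn fun j => stepPerm (W j)).prod

/-- Conjugation of the step `x` by the step `c`, recorded again as a step. -/
def conjStep {d : ℕ} (c x : Step d) : Step d :=
  if h : stepPerm c x.1.1 < stepPerm c x.1.2 then
    ⟨(stepPerm c x.1.1, stepPerm c x.1.2), h⟩
  else
    ⟨(stepPerm c x.1.2, stepPerm c x.1.1),
      lt_of_le_of_ne (not_lt.mp h)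
        (fun he => absurd ((stepPerm c).injective he) (ne_of_gt x.2))⟩

/-- The sorting operator `R_i`: swap steps `i` and `i+1`, conjugating the step of
larger colour by the step of smaller colour; do nothing if the colours agree. -/
def Rop {d r : ℕ} (i : ℕ) (h : i + 1 < r) (W : Fin r → Step d) : Fin r → Step d :=
  let i0 : Fin r := ⟨i, Nat.lt_of_succ_lt h⟩
  let i1 : Fin r := ⟨i + 1, h⟩
  let a := W i0
  let b := W i1
  if colour a < colour b then
    Function.update (Function.update W i0 (conjStep a b)) i1 a
  else if colour b < colour a then
    Function.update (Function.update W i0 b) i1 (conjStep b a)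
  else W

/-- The set of `r`-step walks on the transposition Cayley graph of `S(d)` from
`ρ` to `σ`, encoded as tuples of steps with `ρ * (product of steps) = σ`. -/
def Walk (d r : ℕ) (ρ σ : Equiv.Perm (Fin d)) : Type :=
  {W : Fin r → Step d // ρ * stepProd W = σ}

/-- The spectrum of a walk: the sequence of colours of its steps. -/
def spec {d r : ℕ} {ρ σ : Equiv.Perm (Fin d)} (W : Walk d r ρ σ) : Fin r → Fin d :=
  fun j => colour (W.val j)

/-- The generator condition characterizing the sorting action: the homomorphism
`R : S(r) → Aut(Walk_r(ρ,σ))` sends each Coxeter generator `(i i+1)` to `R_i`. -/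
def IsSortingAction {d r : ℕ} {ρ σ : Equiv.Perm (Fin d)}
    (R : Equiv.Perm (Fin r) →* Equiv.Perm (Walk d r ρ σ)) : Prop :=
  ∀ (i : ℕ) (h : i + 1 < r) (W : Walk d r ρ σ),
    (R (Equiv.swap (⟨i, Nat.lt_of_succ_lt h⟩ : Fin r) (⟨i + 1, h⟩ : Fin r)) W).val
      = Rop i h W.val

/-!
The sorting action moves colours along with the steps: `spec (R π V) ∘ π = spec V`, which it
suffices to check on the generators `R_i`. So the stabilizer of `W` lies in the Young subgroup
of permutations preserving `spec W`. Conversely, as the spectrum is weakly increasing, its colour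
classes are intervals, so the Young subgroup is generated by the adjacent swaps `(i i+1)` inside
them, and these fix `W` because `R_i` is the identity on steps of equal colour. The stabilizer is
thus the Young subgroup, of order `∏ m_t!`, and orbit–stabilizer gives the multinomial count.
-/

open Equiv

section AdjacentSwaps

variable {r : ℕ} {α : Type*} [LinearOrder α] (f : Fin r → α)

def adjacentSwapsOn : Set (Perm (Fin r)) :=
  {g | ∃ a b : Fin r, (a : ℕ) + 1 = b ∧ f a = f b ∧ g = swap a b}

variable {f}

theorem swap_mem_closure_adjacentSwapsOn (hf : Monotone f) {a b : Fin r} (hab : a ≤ b)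
    (hfab : f a = f b) : swap a b ∈ Subgroup.closure (adjacentSwapsOn f) := by
  induction hn : (b : ℕ) - a generalizing a with
  | zero =>
    obtain rfl : a = b := le_antisymm hab (Fin.le_def.mpr (by omega))
    rw [swap_self]
    exact one_mem _
  | succ n ih =>
    have hlt : (a : ℕ) + 1 < r := by omega
    set a' : Fin r := ⟨a + 1, hlt⟩
    have haa' : a < a' := Fin.lt_def.mpr (Nat.lt_succ_self _)
    have ha'b : a' ≤ b := Fin.le_def.mpr (by simp [a']; omega)
    have hfa' : f a = f a' := le_antisymm (hf haa'.le) (hfab ▸ hf ha'b)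
    have hgen : swap a a' ∈ Subgroup.closure (adjacentSwapsOn f) :=
      Subgroup.subset_closure ⟨a, a', rfl, hfa', rfl⟩
    have hrest := ih ha'b (hfa' ▸ hfab) (by simp [a']; omega)
    -- conjugating `(a a')` by `(a' b)` gives `(a b)`, also when `a' = b`
    have hconj : swap a b = swap a' b * swap a a' * (swap a' b)⁻¹ := by
      rw [← swap_apply_apply, swap_apply_left,
        swap_apply_of_ne_of_ne haa'.ne (haa'.trans_le ha'b).ne]
    rw [hconj]
    exact mul_mem (mul_mem hrest hgen) (inv_mem hrest)

theorem mem_closure_adjacentSwapsOn (hf : Monotone f) {π : Perm (Fin r)} (hπ : f ∘ π = f) :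
    π ∈ Subgroup.closure (adjacentSwapsOn f) := by
  induction hn : π.support.card using Nat.strong_induction_on generalizing π with
  | _ n ih =>
    by_cases hone : π = 1
    · exact hone ▸ one_mem _
    obtain ⟨x, hx⟩ : ∃ x, π x ≠ x := not_forall.mp fun h => hone (Perm.ext h)
    have hfx : f x = f (π x) := (congrFun hπ x).symm
    have hswap : swap x (π x) ∈ Subgroup.closure (adjacentSwapsOn f) := by
      rcases le_total x (π x) with h | h
      · exact swap_mem_closure_adjacentSwapsOn hf h hfx
      · exact swap_comm x (π x) ▸ swap_mem_closure_adjacentSwapsOn hf h hfx.symm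
    have hrest : swap x (π x) * π ∈ Subgroup.closure (adjacentSwapsOn f) :=
      ih _ (hn ▸ Perm.card_support_swap_mul hx) (funext fun j => by
        simpa only [Function.comp_apply, Perm.mul_apply, apply_swap_eq_self hfx]
          using congrFun hπ j) rfl
    simpa only [← mul_assoc, swap_mul_self, one_mul] using mul_mem hswap hrest

end AdjacentSwaps

section SortingAction

variable {d r : ℕ}

theorem colour_conjStep {c x : Step d} (h : colour c < colour x) :
    colour (conjStep c x) = colour x := by
  have hc := c.2
  have hx := x.2
  have hfix : stepPerm c x.1.2 = x.1.2 := swap_apply_of_ne_of_ne (hc.trans h).ne' h.ne'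
  have hlt : stepPerm c x.1.1 < stepPerm c x.1.2 := by
    rw [hfix, stepPerm, swap_apply_def]
    split_ifs
    exacts [h, hc.trans h, hx]
  rw [show conjStep c x = ⟨(stepPerm c x.1.1, stepPerm c x.1.2), hlt⟩ from dif_pos hlt]
  exact hfix

theorem colour_Rop (i : ℕ) (h : i + 1 < r) (V : Fin r → Step d) (j : Fin r) :
    colour (Rop i h V j) = colour (V (swap ⟨i, Nat.lt_of_succ_lt h⟩ ⟨i + 1, h⟩ j)) := by
  unfold Rop
  split_ifs with hlt hgt
  rotate_right
  · exact (apply_swap_eq_self (v := colour ∘ V) (le_antisymm (not_lt.mp hgt) (not_lt.mp hlt))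
      j).symm
  all_goals
    rw [Function.update_apply, Function.update_apply, swap_apply_def]
    split_ifs <;> simp_all [Fin.ext_iff, colour_conjStep]

theorem Rop_of_colour_eq (i : ℕ) (h : i + 1 < r) (V : Fin r → Step d)
    (heq : colour (V ⟨i, Nat.lt_of_succ_lt h⟩) = colour (V ⟨i + 1, h⟩)) : Rop i h V = V := by
  simp [Rop, heq]

variable {ρ σ : Perm (Fin d)} {R : Perm (Fin r) →* Perm (Walk d r ρ σ)}

theorem IsSortingAction.spec_apply_comp (hR : IsSortingAction R) (π : Perm (Fin r))
    (V : Walk d r ρ σ) : spec (R π V) ∘ π = spec V := by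
  -- for a constant colouring, `mem_closure_adjacentSwapsOn` says adjacent swaps generate S(r)
  have hπ : π ∈ Subgroup.closure (adjacentSwapsOn fun _ : Fin r => (0 : ℕ)) :=
    mem_closure_adjacentSwapsOn monotone_const rfl
  induction hπ using Subgroup.closure_induction generalizing V with
  | mem g hg =>
    obtain ⟨⟨i, hi⟩, ⟨_, h⟩, rfl, -, rfl⟩ := hg
    funext j
    simp only [Function.comp_apply, spec, hR i h V, colour_Rop, swap_apply_self]
  | one => rw [map_one]; rfl
  | mul x y _ _ hx hy =>
    rw [map_mul, Perm.mul_apply, Perm.coe_mul, ← Function.comp_assoc, hx, hy]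
  | inv x _ hx =>
    have hcancel : R x (R x⁻¹ V) = V := by
      rw [← Perm.mul_apply, ← map_mul, mul_inv_cancel, map_one, Perm.one_apply]
    rw [← hx (R x⁻¹ V), hcancel, Function.comp_assoc, ← Perm.coe_mul, mul_inv_cancel,
      Perm.coe_one, Function.comp_id]

theorem IsSortingAction.apply_eq_self_of_mem_closure (hR : IsSortingAction R)
    {W : Walk d r ρ σ} {π : Perm (Fin r)}
    (hπ : π ∈ Subgroup.closure (adjacentSwapsOn (spec W))) : R π W = W := by
  let := MulAction.compHom (Walk d r ρ σ) R
  suffices Subgroup.closure (adjacentSwapsOn (spec W)) ≤ MulAction.stabilizer _ W from this hπ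
  rw [Subgroup.closure_le]
  rintro _ ⟨⟨i, hi⟩, ⟨_, h⟩, rfl, heq, rfl⟩
  exact Subtype.ext ((hR i h W).trans (Rop_of_colour_eq i h W.val heq))

theorem IsSortingAction.apply_eq_self_iff (hR : IsSortingAction R) {W : Walk d r ρ σ}
    (hW : Monotone (spec W)) (π : Perm (Fin r)) : R π W = W ↔ spec W ∘ π = spec W := by
  refine ⟨fun h => ?_, fun h => ?_⟩
  · simpa only [h] using hR.spec_apply_comp π W
  · exact hR.apply_eq_self_of_mem_closure (mem_closure_adjacentSwapsOn hW h)

end SortingAction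

/-- For a walk `W` with weakly increasing spectrum and colour multiplicities
`m₂, …, m_d`, the orbit of `W` under the sorting action of `S(r)` has size
exactly the multinomial coefficient `r! / (m₂! ⋯ m_d!)`. -/
theorem stmt18 (d r : ℕ) (ρ σ : Equiv.Perm (Fin d))
    (R : Equiv.Perm (Fin r) →* Equiv.Perm (Walk d r ρ σ)) (hR : IsSortingAction R)
    (W : Walk d r ρ σ) (hmono : Monotone (spec W)) :
    Nat.card (Set.range fun π : Equiv.Perm (Fin r) => R π W) *
        ∏ t : Fin d, Nat.factorial (Finset.univ.filter (fun j => spec W j = t)).card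
      = Nat.factorial r := by
  classical
  let := MulAction.compHom (Walk d r ρ σ) R
  have hstab : Nat.card (MulAction.stabilizer (Perm (Fin r)) W) =
      ∏ t : Fin d, Nat.factorial (Finset.univ.filter (fun j => spec W j = t)).card := by
    refine (Nat.card_congr (subtypeEquivRight (hR.apply_eq_self_iff hmono) :
      MulAction.stabilizer (Perm (Fin r)) W ≃ _)).trans ?_
    rw [Nat.card_eq_fintype_card, DomMulAct.stabilizer_card]
    simp only [Fintype.card_subtype]
  have horbit : (Set.range fun π : Perm (Fin r) => R π W) = MulAction.orbit (Perm (Fin r)) W :=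
    rfl
  rw [← hstab, horbit, Nat.card_coe_set_eq, ← MulAction.index_stabilizer,
    Subgroup.index_mul_card, Nat.card_perm, Nat.card_fin]
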